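/- Let N be a 3-prime zero-symmetric left near-ring and d a nonzero multiplicative derivation of N such that d([x,y]) = [d(x), y] for all x, y ∈ N, where [a,b] = ab − ba. Then N is a commutative ring (multiplication is commutative and (N,+) is abelian). -/

import Mathlib

class LeftNearRing (N : Type*) extends AddGroup N, Mul N where
  mul_assoc : ∀ a b c : N, a * b * c = a * (b * c)
  left_distrib : ∀ a b c : N, a * (b + c) = a * b + a * c

/-!
Since `d([x,x]) = d 0 = 0`, every `d x` commutes with `x`; feeding this back into the hypothesis
with `y := x * y` gives `d x * y * x = x * (d x * y)`, hence `d x * N * [z, x] = 0` and, by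
3-primeness, every `x` with `d x ≠ 0` is central. Fix such a `c`: then `d c` is central as well, and
both `c` and `d c` are nonzero central elements, which in a 3-prime near-ring are not zero divisors.
An `x` with `d x = 0` is either `0` or satisfies `d (c * x) = d c * x ≠ 0`, so `c * x` is central
and cancelling `c` makes `x` central. Once multiplication is commutative, the near-ring is also right
distributive, and expanding `u * (x + y)` for `u := d c` in two ways shows that `x + y = y + x`.
-/

namespace LeftNearRing

variable {N : Type*} [LeftNearRing N]

def IsThreePrime (N : Type*) [LeftNearRing N] : Prop :=
  ∀ a b : N, (∀ n : N, a * n * b = 0) → a = 0 ∨ b = 0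

def IsMulDerivation (d : N → N) : Prop :=
  ∀ x y : N, d (x * y) = x * d y + d x * y

theorem mul_zero' (a : N) : a * 0 = 0 := by
  have h := left_distrib a 0 0
  rwa [add_zero, left_eq_add] at h

theorem mul_sub' (a b c : N) : a * (b - c) = a * b - a * c :=
  eq_sub_of_add_eq <| by rw [← left_distrib, sub_add_cancel]

theorem eq_zero_of_central_mul_eq_zero (hp : IsThreePrime N) {a t : N} (ha : a ≠ 0)
    (ha_central : ∀ z : N, z * a = a * z) (ht : a * t = 0) : t = 0 :=
  (hp a t fun n => by rw [← ha_central, mul_assoc, ht, mul_zero']).resolve_left ha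

theorem add_comm_of_mul_comm (hp : IsThreePrime N) (hmul : ∀ x y : N, x * y = y * x)
    {u : N} (hu : u ≠ 0) (x y : N) : x + y = y + x := by
  have right_distrib (a b t : N) : (a + b) * t = a * t + b * t := by
    rw [hmul, left_distrib, hmul t, hmul t]
  -- Expanding `(a + b) * (x + y)` in two orders isolates the middle terms.
  have medial (a b : N) : b * x + a * y = a * y + b * x := by
    have h : a * x + (b * x + (a * y + b * y)) = a * x + (a * y + (b * x + b * y)) := by
      calc _ = (a + b) * (x + y) := by rw [left_distrib, right_distrib, right_distrib, add_assoc]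
        _ = _ := by rw [right_distrib, left_distrib, left_distrib, add_assoc]
    have h' := add_left_cancel h
    rw [← add_assoc, ← add_assoc] at h'
    exact add_right_cancel h'
  have hu_central (z : N) : z * u = u * z := hmul z u
  refine sub_eq_zero.mp (eq_zero_of_central_mul_eq_zero hp hu hu_central ?_)
  rw [mul_sub', left_distrib, left_distrib, medial, sub_self]

section Derivation

variable {d : N → N} (hzs : ∀ x : N, 0 * x = 0) (hd : IsMulDerivation d)
  (hc : ∀ x y : N, d (x * y - y * x) = d x * y - y * d x)
include hzs hd

theorem IsMulDerivation.map_zero : d 0 = 0 := by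
  simpa only [hzs, mul_zero', add_zero] using hd 0 0

include hc

theorem map_central_of_central {x : N} (hx : ∀ y : N, y * x = x * y) (y : N) :
    y * d x = d x * y := by
  have h := hc x y
  rwa [← hx, sub_self, hd.map_zero hzs, eq_comm, sub_eq_zero, eq_comm] at h

theorem map_mul_self_comm (x : N) : d x * x = x * d x := by
  have h := hc x x
  rwa [sub_self, hd.map_zero hzs, eq_comm, sub_eq_zero] at h

theorem map_mul_mul_self_comm (x y : N) : d x * y * x = x * (d x * y) := by
  have h := hc x (x * y)
  rw [mul_assoc, ← mul_sub', hd, hc, mul_sub', mul_sub', ← mul_assoc x y, ← mul_assoc (d x) y,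
    ← mul_assoc (d x) x, map_mul_self_comm hzs hd hc, mul_assoc x (d x)] at h
  have h' := add_left_cancel (h.trans (add_zero _).symm)
  exact (sub_eq_zero.mp h').symm

theorem central_of_map_ne_zero (hp : IsThreePrime N) {x : N} (hx : d x ≠ 0) (z : N) :
    z * x = x * z := by
  have hcomm := map_mul_mul_self_comm hzs hd hc x
  -- `d x * n` commutes with `x` for every `n`, so `d x * N * [z, x] = 0`.
  have h (n : N) : d x * n * (z * x - x * z) = 0 := by
    have key : d x * n * (z * x) = d x * n * (x * z) := by
      calc d x * n * (z * x) = d x * (n * z) * x := by rw [← mul_assoc, mul_assoc (d x)]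
        _ = x * (d x * n) * z := by rw [hcomm, ← mul_assoc, ← mul_assoc, mul_assoc x]
        _ = d x * n * (x * z) := by rw [← hcomm, mul_assoc]
    rw [mul_sub', key, sub_self]
  exact sub_eq_zero.mp ((hp _ _ h).resolve_left hx)

theorem mul_comm_of_map_ne_zero (hp : IsThreePrime N) {c : N} (hc0 : d c ≠ 0) (x z : N) :
    x * z = z * x := by
  have hc_central := central_of_map_ne_zero hzs hd hc hp hc0
  have hdc_central := map_central_of_central hzs hd hc hc_central
  by_cases hx : d x = 0
  · by_cases hdcx : d c * x = 0
    · rw [eq_zero_of_central_mul_eq_zero hp hc0 hdc_central hdcx, hzs, mul_zero']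
    · have hcx : d (c * x) ≠ 0 := by rwa [hd, hx, mul_zero', zero_add]
      have hc_ne : c ≠ 0 := by rintro rfl; exact hc0 (hd.map_zero hzs)
      have h := central_of_map_ne_zero hzs hd hc hp hcx z
      rw [← mul_assoc, hc_central, mul_assoc, mul_assoc] at h
      refine (sub_eq_zero.mp (eq_zero_of_central_mul_eq_zero hp hc_ne hc_central ?_)).symm
      rw [mul_sub', h, sub_self]
  · exact (central_of_map_ne_zero hzs hd hc hp hx z).symm

end Derivation

end LeftNearRing

theorem stmt8 {N : Type*} [LeftNearRing N]
    (hzs : ∀ x : N, 0 * x = 0)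
    (hp : ∀ a b : N, (∀ n : N, a * n * b = 0) → a = 0 ∨ b = 0)
    (d : N → N) (hd : ∀ x y : N, d (x * y) = x * d y + d x * y)
    (hd0 : ∃ x : N, d x ≠ 0)
    (hc : ∀ x y : N, d (x * y - y * x) = d x * y - y * d x) :
    (∀ x y : N, x * y = y * x) ∧ (∀ x y : N, x + y = y + x) := by
  obtain ⟨c, hc0⟩ := hd0
  have hmul := LeftNearRing.mul_comm_of_map_ne_zero hzs hd hc hp hc0
  exact ⟨hmul, LeftNearRing.add_comm_of_mul_comm hp hmul hc0⟩
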